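/- Let (S,+) be a commutative semigroup, let A ⊆ S, and suppose that for every finite coloring of S some translate of some member of a collection 𝒫 of finite subsets of S is monochromatic. If A is piecewise syndetic, p ∈ K(βS) ∩ cl(A), B = {x ∈ S : -x+A ∈ p}, and s+P ⊆ B for some s ∈ S and P ∈ 𝒫, then C = ∩_{t∈s+P}(-t+A) ∈ p and s+C ⊆ {z ∈ S : z+P ⊆ A}; in particular {z ∈ S : z+P ⊆ A} is piecewise syndetic. -/
import Mathlib


attribute [local instance] Ultrafilter.add

/-- `A` is piecewise syndetic in the commutative semigroup `(S,+)`. -/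
def PiecewiseSyndetic {S : Type*} [AddCommSemigroup S] (A : Set S) : Prop :=
  ∃ G : Finset S, ∀ F : Finset S, ∃ x : S, ∀ f ∈ F, ∃ t ∈ G, t + (f + x) ∈ A

/-- `I` is a two-sided ideal of `βS = Ultrafilter S`. -/
def IsIdealUF {S : Type*} [AddCommSemigroup S] (I : Set (Ultrafilter S)) : Prop :=
  I.Nonempty ∧ ∀ p ∈ I, ∀ q : Ultrafilter S, q + p ∈ I ∧ p + q ∈ I


open Filter Set in
section

section AuxPS

variable {S : Type*} [AddCommSemigroup S]

theorem uf_mem_add {U V : Ultrafilter S} {E : Set S} :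
    E ∈ U + V ↔ {a | {b | a + b ∈ E} ∈ V} ∈ U := Iff.rfl

theorem uf_add_assoc (U V W : Ultrafilter S) : U + V + W = U + (V + W) :=
  @add_assoc _ Ultrafilter.addSemigroup U V W

end AuxPS

section Aux2

variable {S : Type*} [AddCommSemigroup S]

theorem exists_min_elt [Nonempty S] :
    ∃ m : Ultrafilter S, ∀ q : Ultrafilter S, ∃ w : Ultrafilter S, w + (q + m) = m := by
  classical
  set 𝒮 : Set (Set (Ultrafilter S)) :=
    {L | L.Nonempty ∧ IsClosed L ∧ ∀ q : Ultrafilter S, ∀ m ∈ L, q + m ∈ L} with h𝒮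
  have huniv : (Set.univ : Set (Ultrafilter S)) ∈ 𝒮 :=
    ⟨⟨pure (Classical.arbitrary S), trivial⟩, isClosed_univ, fun _ _ _ => trivial⟩
  have hzorn : ∀ c ⊆ 𝒮, IsChain (· ⊆ ·) c → c.Nonempty →
      ∃ lb ∈ 𝒮, ∀ s ∈ c, lb ⊆ s := by
    rintro c hc hchain ⟨L0, hL0⟩
    refine ⟨⋂₀ c, ⟨?_, isClosed_sInter fun L hL => (hc hL).2.1, ?_⟩, fun L hL => sInter_subset_of_mem hL⟩
    · have : Nonempty c := ⟨⟨L0, hL0⟩⟩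
      have hdir : DirectedOn (· ⊇ ·) c := by
        intro a ha b hb
        rcases eq_or_ne a b with rfl | hne
        · exact ⟨a, ha, Set.Subset.rfl, Set.Subset.rfl⟩
        · rcases hchain ha hb hne with h | h
          · exact ⟨a, ha, Set.Subset.rfl, h⟩
          · exact ⟨b, hb, h, Set.Subset.rfl⟩
      exact IsCompact.nonempty_sInter_of_directed_nonempty_isCompact_isClosed
        hdir (fun L hL => (hc hL).1)
        (fun L hL => (hc hL).2.1.isCompact) (fun L hL => (hc hL).2.1)
    · intro q m hm L hL
      exact (hc hL).2.2 q m (hm L hL)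
  obtain ⟨M, -, hM⟩ := zorn_superset_nonempty 𝒮 hzorn _ huniv
  obtain ⟨hMne, hMcl, hMid⟩ := hM.prop
  obtain ⟨m, hm⟩ := hMne
  refine ⟨m, fun q => ?_⟩
  set L' : Set (Ultrafilter S) := Set.range (· + (q + m)) with hL'
  have hL'sub : L' ⊆ M := by
    rintro _ ⟨w, rfl⟩
    exact hMid w _ (hMid q m hm)
  have hL'mem : L' ∈ 𝒮 := by
    refine ⟨⟨m + (q + m), ⟨m, rfl⟩⟩, ?_, ?_⟩
    · have h := (isCompact_univ.image (Ultrafilter.continuous_add_left (q + m))).isClosed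
      rwa [Set.image_univ] at h
    · rintro v _ ⟨w, rfl⟩
      exact ⟨v + w, (uf_add_assoc v w (q + m)).symm ▸ rfl⟩
  have : M ⊆ L' := hM.2 hL'mem hL'sub
  obtain ⟨w, hw⟩ := this hm
  exact ⟨w, hw⟩

end Aux2

section Aux3

variable {S : Type*} [AddCommSemigroup S]

theorem members_PS {m : Ultrafilter S} (hm : ∀ q : Ultrafilter S, ∃ w, w + (q + m) = m)
    {E : Set S} (hE : E ∈ m) : PiecewiseSyndetic E := by
  classical
  set s : S → Set S := fun x => {a | {b | x + (a + b) ∈ E} ∈ m} with hs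
  have hcov : (Set.univ : Set (Ultrafilter S)) ⊆ ⋃ x : S, {q : Ultrafilter S | s x ∈ q} := by
    intro q _
    obtain ⟨w, hw⟩ := hm q
    have hE' : E ∈ w + (q + m) := hw.symm ▸ hE
    rw [uf_mem_add] at hE'
    obtain ⟨x, hx⟩ := Ultrafilter.nonempty_of_mem hE'
    have hx' : {b | x + b ∈ E} ∈ q + m := hx
    rw [uf_mem_add] at hx'
    exact Set.mem_iUnion.mpr ⟨x, hx'⟩
  obtain ⟨G, hG⟩ := isCompact_univ.elim_finite_subcover _
    (fun x : S => ultrafilter_isOpen_basic (s x)) hcov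
  have hch : ∀ f : S, ∃ t : S, t ∈ G ∧ {b | t + (f + b) ∈ E} ∈ m := by
    intro f
    have := hG (Set.mem_univ (pure f : Ultrafilter S))
    rw [Set.mem_iUnion₂] at this
    obtain ⟨t, htG, ht⟩ := this
    exact ⟨t, htG, ht⟩
  choose g hg1 hg2 using hch
  refine ⟨G, fun F => ?_⟩
  have hT : (⋂ f ∈ F, {b | g f + (f + b) ∈ E}) ∈ m :=
    (Filter.biInter_finset_mem F).mpr fun f _ => hg2 f
  obtain ⟨y, hy⟩ := Ultrafilter.nonempty_of_mem hT
  rw [Set.mem_iInter₂] at hy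
  exact ⟨y, fun f hf => ⟨g f, hg1 f, hy f hf⟩⟩

theorem absorb_left {r : Ultrafilter S} (hr : ∀ E ∈ r, PiecewiseSyndetic E)
    (q : Ultrafilter S) : ∀ E ∈ q + r, PiecewiseSyndetic E := by
  classical
  intro E hE
  rw [uf_mem_add] at hE
  obtain ⟨a, ha⟩ := Ultrafilter.nonempty_of_mem hE
  obtain ⟨G, hG⟩ := hr _ ha
  refine ⟨G.image (a + ·), fun F => ?_⟩
  obtain ⟨x, hx⟩ := hG F
  refine ⟨x, fun f hf => ?_⟩
  obtain ⟨t, ht, h⟩ := hx f hf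
  exact ⟨a + t, Finset.mem_image_of_mem _ ht, by rw [add_assoc]; exact h⟩

theorem absorb_right {r : Ultrafilter S} (hr : ∀ E ∈ r, PiecewiseSyndetic E)
    (q : Ultrafilter S) : ∀ E ∈ r + q, PiecewiseSyndetic E := by
  classical
  intro E hE
  rw [uf_mem_add] at hE
  obtain ⟨G, hG⟩ := hr _ hE
  refine ⟨G, fun F => ?_⟩
  obtain ⟨y, hy⟩ := hG F
  have hch : ∀ f : S, ∃ t : S, f ∈ F → t ∈ G ∧ {b | (t + (f + y)) + b ∈ E} ∈ q := by
    intro f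
    by_cases hf : f ∈ F
    · obtain ⟨t, ht, hB⟩ := hy f hf
      exact ⟨t, fun _ => ⟨ht, hB⟩⟩
    · exact ⟨f, fun h => absurd h hf⟩
  choose g hg using hch
  have hT : (⋂ f ∈ F, {b | (g f + (f + y)) + b ∈ E}) ∈ q :=
    (Filter.biInter_finset_mem F).mpr fun f hf => (hg f hf).2
  obtain ⟨z, hz⟩ := Ultrafilter.nonempty_of_mem hT
  rw [Set.mem_iInter₂] at hz
  refine ⟨y + z, fun f hf => ⟨g f, (hg f hf).1, ?_⟩⟩
  have h2 := hz f hf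
  simpa [add_assoc] using h2

end Aux3

end

/-- The key step in the proof of Theorem `abun piecewise`: if every finite coloring of `S`
admits a monochromatic translate of a member of `Ps`, `A` is piecewise syndetic,
`p ∈ K(βS) ∩ cl A`, `B = {x : -x+A ∈ p}`, and `s' + P ⊆ B` for some `P ∈ Ps`, then
`C = ⋂_{t ∈ s'+P} (-t+A) ∈ p`, `s' + C ⊆ {z : z + P ⊆ A}`, and in particular
`{z : z + P ⊆ A}` is piecewise syndetic. -/
theorem stmt_11 {S : Type*} [AddCommSemigroup S] (Ps : Set (Finset S)) (A : Set S)
    (hcolor : ∀ (r : ℕ) (c : S → Fin r), ∃ i : Fin r, ∃ P ∈ Ps, ∃ s : S,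
        ∀ t ∈ P, c (s + t) = i)
    (hA : PiecewiseSyndetic A)
    (K : Set (Ultrafilter S)) (hK : IsIdealUF K)
    (hKmin : ∀ I : Set (Ultrafilter S), IsIdealUF I → K ⊆ I)
    (p : Ultrafilter S) (hp : p ∈ K) (hAp : A ∈ p)
    (P : Finset S) (hP : P ∈ Ps) (s' : S)
    (hs' : ∀ t ∈ P, s' + t ∈ {x : S | {y : S | x + y ∈ A} ∈ p}) :
    {y : S | ∀ t ∈ P, (s' + t) + y ∈ A} ∈ p ∧
    (∀ c ∈ {y : S | ∀ t ∈ P, (s' + t) + y ∈ A}, ∀ t ∈ P, (s' + c) + t ∈ A) ∧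
    PiecewiseSyndetic {z : S | ∀ t ∈ P, z + t ∈ A} := by
  classical
  have hne : Nonempty S := Filter.nonempty_of_neBot (p : Filter S)
  obtain ⟨m, hm⟩ := exists_min_elt (S := S)
  have hIideal : IsIdealUF {r : Ultrafilter S | ∀ E ∈ r, PiecewiseSyndetic E} :=
    ⟨⟨m, fun E hE => members_PS hm hE⟩,
     fun r hr q => ⟨absorb_left hr q, absorb_right hr q⟩⟩
  have hpI : p ∈ {r : Ultrafilter S | ∀ E ∈ r, PiecewiseSyndetic E} := hKmin _ hIideal hp
  have h1 : {y : S | ∀ t ∈ P, (s' + t) + y ∈ A} ∈ p := by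
    have heq : {y : S | ∀ t ∈ P, (s' + t) + y ∈ A} = ⋂ t ∈ P, {y | (s' + t) + y ∈ A} := by
      ext y; simp
    rw [heq]
    exact (Filter.biInter_finset_mem P).mpr fun t ht => hs' t ht
  refine ⟨h1, fun c hc t ht => ?_, ?_⟩
  · have h := hc t ht
    rwa [add_right_comm]
  · have hZ : {z : S | ∀ t ∈ P, z + t ∈ A} ∈ (pure s' : Ultrafilter S) + p := by
      rw [uf_mem_add]
      refine Ultrafilter.mem_pure.mpr ?_
      show {b | ∀ t ∈ P, (s' + b) + t ∈ A} ∈ p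
      refine Filter.mem_of_superset h1 fun y hy t ht => ?_
      rw [add_right_comm]
      exact hy t ht
    exact (hIideal.2 p hpI (pure s')).1 _ hZ
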